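/- arXiv:1812.06439 — 2 statements merged into one kernel-verified Lean document; each statement's English description precedes it below -/
import Mathlib

section
/- Let I be a finite index set, ℓ : I → ℝ, and let λ₁, …, λₘ be a ℚ-basis of the ℚ-linear span of {ℓ_i : i ∈ I}, with ℓ_i = ∑_{j=1}^m α_{ij}·λ_j where α_{ij} ∈ ℚ. Let φ : I → ([0,1] → ℝ) be such that for every ℚ-linear function f : ℝ → ℝ the sum ∑_{i ∈ I} f(ℓ_i)·φ_i(t) is independent of t. Then for every j ∈ {1, …, m}, the sum ∑_{i ∈ I} α_{ij}·φ_i(t) is independent of t. -/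
theorem stmt_5 (I : Type*) [Fintype I] (ℓ : I → ℝ) (m : ℕ) (lam : Fin m → ℝ)
    (hli : LinearIndependent ℚ lam)
    (hspan : Submodule.span ℚ (Set.range lam) = Submodule.span ℚ (Set.range ℓ))
    (α : I → Fin m → ℚ)
    (hdecomp : ∀ i, ℓ i = ∑ j, (α i j : ℝ) * lam j)
    (φ : I → ℝ → ℝ)
    (hinv : ∀ f : ℝ → ℝ, IsLinearMap ℚ f →
      ∀ t ∈ Set.Icc (0:ℝ) 1, ∀ t' ∈ Set.Icc (0:ℝ) 1,
        ∑ i, f (ℓ i) * φ i t = ∑ i, f (ℓ i) * φ i t') :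
    ∀ j : Fin m, ∀ t ∈ Set.Icc (0:ℝ) 1, ∀ t' ∈ Set.Icc (0:ℝ) 1,
      ∑ i, (α i j : ℝ) * φ i t = ∑ i, (α i j : ℝ) * φ i t' := by
  intro j t ht t' ht'
  have hli' : LinearIndepOn ℚ id (Set.range lam) :=
    (linearIndepOn_id_range_iff hli.injective).mpr hli
  let B := Module.Basis.extend hli'
  have hmem : ∀ k, lam k ∈ hli'.extend (Set.subset_univ _) := fun k =>
    hli'.subset_extend _ ⟨k, rfl⟩
  let F : ℝ →ₗ[ℚ] ℝ :=
    (Algebra.linearMap ℚ ℝ).comp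
      ((Finsupp.lapply (⟨lam j, hmem j⟩ : hli'.extend (Set.subset_univ _))).comp
        B.repr.toLinearMap)
  have hFlam : ∀ k, F (lam k) = if k = j then 1 else 0 := by
    intro k
    have hBk : B ⟨lam k, hmem k⟩ = lam k := Module.Basis.extend_apply_self hli' _
    have : F (B ⟨lam k, hmem k⟩) =
        ((Finsupp.single (⟨lam k, hmem k⟩ : hli'.extend (Set.subset_univ _)) (1 : ℚ))
          (⟨lam j, hmem j⟩ : hli'.extend (Set.subset_univ _)) : ℝ) := by
      simp [F, Module.Basis.repr_self]
    rw [hBk] at this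
    rw [this, Finsupp.single_apply]
    by_cases h : k = j
    · subst h; simp
    · have hne : (⟨lam k, hmem k⟩ : hli'.extend (Set.subset_univ _)) ≠ ⟨lam j, hmem j⟩ := by
        intro hEq
        exact h (hli.injective (by simpa using congrArg Subtype.val hEq))
      simp [hne, h]
  have hFl : ∀ i, F (ℓ i) = (α i j : ℝ) := by
    intro i
    rw [hdecomp i]
    have : (∑ k, (α i k : ℝ) * lam k) = ∑ k, (α i k) • lam k := by
      simp [Rat.smul_def]
    rw [this, map_sum]
    simp only [map_smul, hFlam]
    rw [Finset.sum_eq_single j]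
    · simp
    · intro b _ hb; simp [hb]
    · intro h; exact absurd (Finset.mem_univ j) h
  have := hinv F ⟨fun x y => F.map_add x y, fun c x => F.map_smul c x⟩ t ht t' ht'
  simpa [hFl] using this
end

section
/- Let I be a finite index set, ℓ : I → ℝ, and let φ, ψ : I → ([0,1] → ℝ) be two families such that for every ℚ-linear f : ℝ → ℝ, both ∑_{i} f(ℓ_i)·φ_i(t) and ∑_{i} f(ℓ_i)·ψ_i(t) are independent of t. Then for every ℚ-linear f, the sum ∑_i f(ℓ_i)·(φ_i − ψ_i)(t) is independent of t; in particular if additionally the ℓ_i are ℚ-linearly independent and φ_i(0) = ψ_i(0) for all i, then φ_i(t) = ψ_i(t) for all i and t. -/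
theorem stmt_14 (I : Type*) [Fintype I] (ℓ : I → ℝ) (φ ψ : I → ℝ → ℝ)
    (hφ : ∀ f : ℝ → ℝ, IsLinearMap ℚ f →
      ∀ t ∈ Set.Icc (0:ℝ) 1, ∀ t' ∈ Set.Icc (0:ℝ) 1,
        ∑ i, f (ℓ i) * φ i t = ∑ i, f (ℓ i) * φ i t')
    (hψ : ∀ f : ℝ → ℝ, IsLinearMap ℚ f →
      ∀ t ∈ Set.Icc (0:ℝ) 1, ∀ t' ∈ Set.Icc (0:ℝ) 1,
        ∑ i, f (ℓ i) * ψ i t = ∑ i, f (ℓ i) * ψ i t') :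
    (∀ f : ℝ → ℝ, IsLinearMap ℚ f →
      ∀ t ∈ Set.Icc (0:ℝ) 1, ∀ t' ∈ Set.Icc (0:ℝ) 1,
        ∑ i, f (ℓ i) * (φ i t - ψ i t) = ∑ i, f (ℓ i) * (φ i t' - ψ i t')) ∧
    (LinearIndependent ℚ ℓ → (∀ i, φ i 0 = ψ i 0) →
      ∀ i, ∀ t ∈ Set.Icc (0:ℝ) 1, φ i t = ψ i t) := by
  have key : ∀ f : ℝ → ℝ, IsLinearMap ℚ f →
      ∀ t ∈ Set.Icc (0:ℝ) 1, ∀ t' ∈ Set.Icc (0:ℝ) 1,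
        ∑ i, f (ℓ i) * (φ i t - ψ i t) = ∑ i, f (ℓ i) * (φ i t' - ψ i t') := by
    intro f hf t ht t' ht'
    have h1 := hφ f hf t ht t' ht'
    have h2 := hψ f hf t ht t' ht'
    simp only [mul_sub, Finset.sum_sub_distrib, h1, h2]
  classical
  refine ⟨key, fun hli h0 i₀ t ht => ?_⟩
  have hinj : Function.Injective ℓ := hli.injective
  have hlis : LinearIndepOn ℚ id (Set.range ℓ) := (linearIndepOn_id_range_iff hinj).mpr hli
  let b : Module.Basis _ ℚ ℝ := Module.Basis.extend hlis
  have hsub : Set.range ℓ ⊆ hlis.extend (Set.subset_univ _) := hlis.subset_extend _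
  have hmem : ∀ i, ℓ i ∈ hlis.extend (Set.subset_univ _) := fun i => hsub ⟨i, rfl⟩
  set j₀ : hlis.extend (Set.subset_univ _) := ⟨ℓ i₀, hmem i₀⟩ with hj₀
  have hbself : ∀ i, b ⟨ℓ i, hmem i⟩ = ℓ i := fun i => Module.Basis.extend_apply_self hlis _
  set f : ℝ → ℝ := fun x => ((b.coord j₀ x : ℚ) : ℝ) with hfdef
  have hf : IsLinearMap ℚ f := by
    constructor
    · intro x y; simp [hfdef, map_add]
    · intro c x
      show ((b.coord j₀ (c • x) : ℚ) : ℝ) = c • ((b.coord j₀ x : ℚ) : ℝ)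
      rw [map_smul]
      push_cast [Rat.smul_def]
      ring
  have hfval : ∀ i, f (ℓ i) = if i = i₀ then 1 else 0 := by
    intro i
    have hc : b.coord j₀ (ℓ i) = if i = i₀ then 1 else 0 := by
      rw [← hbself i, Module.Basis.coord_apply, Module.Basis.repr_self, Finsupp.single_apply]
      by_cases h : i = i₀
      · subst h; simp [hj₀]
      · have hne : (⟨ℓ i, hmem i⟩ : hlis.extend (Set.subset_univ _)) ≠ j₀ := by
          simp only [hj₀, ne_eq, Subtype.mk.injEq]
          exact fun he => h (hinj he)
        simp [hne, h]
    show ((b.coord j₀ (ℓ i) : ℚ) : ℝ) = _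
    rw [hc]
    split <;> simp
  have h0' : ∑ i, f (ℓ i) * (φ i 0 - ψ i 0) = 0 := by
    apply Finset.sum_eq_zero
    intro i _
    rw [h0 i]; ring
  have hkey := key f hf t ht 0 (by norm_num)
  rw [h0'] at hkey
  have hsum : ∑ i, f (ℓ i) * (φ i t - ψ i t) = φ i₀ t - ψ i₀ t := by
    rw [Finset.sum_eq_single i₀]
    · rw [hfval i₀]; simp
    · intro i _ hne; rw [hfval i]; simp [hne]
    · intro h; exact absurd (Finset.mem_univ i₀) h
  rw [hsum] at hkey
  linarith
end
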